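/- If the solution set Q has dimension strictly greater than 0, then there exists a nontrivial polynomial s ∈ V (s not identically zero) that vanishes at every essential point of minimal and maximal deviation, i.e., s(u) = 0 for all u ∈ N ∪ P. -/
import Mathlib


open Set

noncomputable section

/-- `g` is a polynomial function on `ℝⁿ`. -/
def IsPolyFun (n : ℕ) (g : (Fin n → ℝ) → ℝ) : Prop :=
  ∃ P : MvPolynomial (Fin n) ℝ, ∀ x, g x = MvPolynomial.eval x P

/-- The uniform deviation `‖f − q‖_∞ = max_{x ∈ X} |f x − q x|`. -/
def dev {n : ℕ} (X : Set (Fin n → ℝ)) (f q : (Fin n → ℝ) → ℝ) : ℝ :=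
  sSup ((fun x => |f x - q x|) '' X)

/-- The solution set `Q` of the Chebyshev approximation problem for `f` on `X` over `V`. -/
def solSet {n : ℕ} (V : Submodule ℝ ((Fin n → ℝ) → ℝ)) (X : Set (Fin n → ℝ))
    (f : (Fin n → ℝ) → ℝ) : Set ((Fin n → ℝ) → ℝ) :=
  {q | q ∈ V ∧ ∀ p ∈ V, dev X f q ≤ dev X f p}

/-- `N(q)`: points of minimal deviation. -/
def Nset {n : ℕ} (X : Set (Fin n → ℝ)) (f q : (Fin n → ℝ) → ℝ) : Set (Fin n → ℝ) :=
  {x ∈ X | q x - f x = dev X f q}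

/-- `P(q)`: points of maximal deviation. -/
def Pset {n : ℕ} (X : Set (Fin n → ℝ)) (f q : (Fin n → ℝ) → ℝ) : Set (Fin n → ℝ) :=
  {x ∈ X | f x - q x = dev X f q}

/-- `S(q)`: the set of polynomials in `V` separating `P(q)` and `N(q)`. -/
def sepSet {n : ℕ} (V : Submodule ℝ ((Fin n → ℝ) → ℝ)) (X : Set (Fin n → ℝ))
    (f q : (Fin n → ℝ) → ℝ) : Set ((Fin n → ℝ) → ℝ) :=
  {s | s ∈ V ∧ ∀ x ∈ Pset X f q, ∀ y ∈ Nset X f q, s x * s y ≤ 0}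


lemma abs_le_dev {n : ℕ} (X : Set (Fin n → ℝ)) (hXc : IsCompact X)
    (f : (Fin n → ℝ) → ℝ) (hf : ContinuousOn f X)
    (q : (Fin n → ℝ) → ℝ) (hq : IsPolyFun n q) {x : (Fin n → ℝ)} (hx : x ∈ X) :
    |f x - q x| ≤ dev X f q := by
  obtain ⟨P, hP⟩ := hq
  have hqc : Continuous q := by
    have := MvPolynomial.continuous_eval (p := P)
    simpa [funext hP] using this
  have hcont : ContinuousOn (fun x => |f x - q x|) X :=
    (hf.sub hqc.continuousOn).abs
  have hbdd : BddAbove ((fun x => |f x - q x|) '' X) :=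
    (hXc.image_of_continuousOn hcont).bddAbove
  exact le_csSup hbdd ⟨x, hx, rfl⟩

/-- If the solution set `Q` has dimension strictly greater than `0`, then there exists a
nontrivial polynomial `s ∈ V` vanishing at every essential point of minimal and maximal
deviation, i.e. `s(u) = 0` for all `u ∈ N ∪ P`, where `N = N(q₀)`, `P = P(q₀)` for `q₀`
in the relative interior of `Q`. -/
theorem stmt7 (n : ℕ) (X : Set (Fin n → ℝ)) (hX : X.Nonempty) (hXc : IsCompact X)
    (f : (Fin n → ℝ) → ℝ) (hf : ContinuousOn f X)
    (V : Submodule ℝ ((Fin n → ℝ) → ℝ)) (hVpoly : ∀ g ∈ V, IsPolyFun n g)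
    (hVfd : FiniteDimensional ℝ ↥V)
    (q₀ : (Fin n → ℝ) → ℝ) (hq₀ : q₀ ∈ intrinsicInterior ℝ (solSet V X f))
    (hdim : 0 < Module.finrank ℝ (affineSpan ℝ (solSet V X f)).direction) :
    ∃ s ∈ V, s ≠ 0 ∧ ∀ u ∈ Nset X f q₀ ∪ Pset X f q₀, s u = 0 := by
  classical
  set Q := solSet V X f with hQ
  have hq₀Q : q₀ ∈ Q := intrinsicInterior_subset hq₀
  have hQV : Q ⊆ (V : Set _) := fun q hq => hq.1
  -- direction of affine span is contained in V
  have hdir : (affineSpan ℝ Q).direction ≤ V := by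
    rw [direction_affineSpan]
    rw [vectorSpan_def]
    apply Submodule.span_le.mpr
    rintro w ⟨a, ha, b, hb, rfl⟩
    exact Submodule.sub_mem V (hQV ha) (hQV hb)
  -- pick a nonzero direction vector
  have : Nontrivial ((affineSpan ℝ Q).direction) :=
    Module.nontrivial_of_finrank_pos hdim
  obtain ⟨v, hv0⟩ := exists_ne (0 : (affineSpan ℝ Q).direction)
  set s : (Fin n → ℝ) → ℝ := (v : (Fin n → ℝ) → ℝ) with hs
  have hsV : s ∈ V := hdir v.2
  have hsne : s ≠ 0 := fun h => hv0 (Subtype.ext h)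
  -- get ε > 0 with q₀ ± ε • s ∈ Q
  obtain ⟨y, hy, hyq⟩ := hq₀
  have hq₀span : q₀ ∈ affineSpan ℝ Q := subset_affineSpan ℝ Q hq₀Q
  have hmem : ∀ t : ℝ, t • s + q₀ ∈ affineSpan ℝ Q := by
    intro t
    have : t • s + q₀ = (t • v : (affineSpan ℝ Q).direction) +ᵥ q₀ := rfl
    rw [this]
    exact AffineSubspace.vadd_mem_of_mem_direction (t • v).2 hq₀span
  set g : ℝ → ↥(affineSpan ℝ Q) := fun t => ⟨t • s + q₀, hmem t⟩ with hg
  have hgc : Continuous g := by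
    apply Continuous.subtype_mk
    exact (continuous_id.smul continuous_const).add continuous_const
  have hg0 : g 0 = y := by
    apply Subtype.ext
    simp [hg, hyq]
  have hopen : IsOpen (g ⁻¹' (interior ((↑) ⁻¹' Q))) := isOpen_interior.preimage hgc
  have h0mem : (0 : ℝ) ∈ g ⁻¹' (interior ((↑) ⁻¹' Q)) := by
    simp only [Set.mem_preimage, hg0]; exact hy
  obtain ⟨ε, hε, hball⟩ := Metric.isOpen_iff.mp hopen 0 h0mem
  set t : ℝ := ε / 2 with ht
  have htpos : 0 < t := by positivity
  have hmemQ : ∀ c : ℝ, |c| < ε → c • s + q₀ ∈ Q := by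
    intro c hc
    have : c ∈ Metric.ball (0 : ℝ) ε := by simpa [Real.dist_eq] using hc
    have := interior_subset (hball this)
    simpa using this
  have habs : |t| < ε := by rw [abs_of_pos htpos]; linarith
  have hnabs : |(-t)| < ε := by rw [abs_neg]; exact habs
  have hpQ : t • s + q₀ ∈ Q := hmemQ t habs
  have hnQ : (-t) • s + q₀ ∈ Q := hmemQ (-t) hnabs
  -- both have the same deviation as q₀
  have hdevp : dev X f (t • s + q₀) = dev X f q₀ :=
    le_antisymm (hpQ.2 q₀ (hQV hq₀Q)) (hq₀Q.2 _ (hQV hpQ))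
  have hdevn : dev X f ((-t) • s + q₀) = dev X f q₀ :=
    le_antisymm (hnQ.2 q₀ (hQV hq₀Q)) (hq₀Q.2 _ (hQV hnQ))
  refine ⟨s, hsV, hsne, ?_⟩
  intro u hu
  have hb1 : |f u - (t • s + q₀) u| ≤ dev X f q₀ := by
    rw [← hdevp]
    exact abs_le_dev X hXc f hf _ (hVpoly _ (hQV hpQ)) (by rcases hu with h | h <;> exact h.1)
  have hb2 : |f u - ((-t) • s + q₀) u| ≤ dev X f q₀ := by
    rw [← hdevn]
    exact abs_le_dev X hXc f hf _ (hVpoly _ (hQV hnQ)) (by rcases hu with h | h <;> exact h.1)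
  have e1 : (t • s + q₀) u = t * s u + q₀ u := rfl
  have e2 : ((-t) • s + q₀) u = -t * s u + q₀ u := rfl
  rw [e1] at hb1
  rw [e2] at hb2
  have h1 := abs_le.mp hb1
  have h2 := abs_le.mp hb2
  have hsu : t * s u = 0 := by
    rcases hu with h | h
    · have hd : q₀ u - f u = dev X f q₀ := h.2
      have := h1.1; have := h1.2; have := h2.1; have := h2.2
      nlinarith
    · have hd : f u - q₀ u = dev X f q₀ := h.2
      have := h1.1; have := h1.2; have := h2.1; have := h2.2
      nlinarith
  exact mul_left_cancel₀ (ne_of_gt htpos) (by rw [hsu, mul_zero])
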